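/- arXiv:2010.15882 — 5 statements merged into one kernel-verified Lean document; each statement's English description precedes it below -/
import Mathlib

section
/- Let f_1 = \sum_{k=1}^\infty (p_k - 1)/(p_1 p_2 \cdots p_{k-1}) and define recursively f_{n+1} = \lfloor f_n \rfloor (f_n - \lfloor f_n \rfloor + 1) for n \ge 1. Then \lfloor f_n \rfloor = p_n for every n \ge 1, i.e., the floor of f_n is the n-th prime. -/
open scoped BigOperators

/-- `p k` is the `(k+1)`-st prime, i.e. the paper's `p_{k+1}` (so `p 0 = 2`). -/
noncomputable def p (k : ℕ) : ℕ := Nat.nth Nat.Prime k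

/-- The `k`-th summand `(p_{k+1} - 1) / (p_1 ⋯ p_k)` of the series (0-indexed). -/
noncomputable def primeTerm (k : ℕ) : ℝ :=
  ((p k : ℝ) - 1) / ∏ i ∈ Finset.range k, (p i : ℝ)

/-!
For a sequence `a` with `a k < a (k+1) < 2 a k`, let
`T n = ∑ₖ (a (n+k) - 1) / (a n ⋯ a (n+k-1))`. Splitting off the first term gives
`T n = a n - 1 + T (n+1) / a n`, so the recursion `f ↦ ⌊f⌋ (f - ⌊f⌋ + 1)` maps `T n` to `T (n+1)`
as soon as `⌊T n⌋ = a n`, i.e. as soon as `a n ≤ T (n+1) < 2 a n`. The lower bound is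
`T (n+1) ≥ a (n+1) - 1 ≥ a n`. For the upper bound, `a (j+1) - 1 ≤ 2 (a j - 1)` bounds the tail
`T (n+1) / a n` termwise by twice the telescoping series
`∑ₖ (1/(a n ⋯ a (n+k-1)) - 1/(a n ⋯ a (n+k))) = 1`, strictly as soon as `a (j+1) < 2 a j - 1`
for one `j ≥ n`. For the primes, Bertrand's postulate gives `p (j+1) < 2 p j`; if
`p (j+1) = 2 p j - 1` held for all `j ≥ n`, then `p (n+i) - 1 = 2^i (p n - 1)`, and Fermat's little
theorem would make the prime `q = p (n+1)` divide the larger prime `p (n+q)`.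
-/

open Filter Topology

noncomputable def blockProd (a : ℕ → ℕ) (n k : ℕ) : ℝ := ∏ i ∈ Finset.range k, (a (n + i) : ℝ)

noncomputable def tailTerm (a : ℕ → ℕ) (n k : ℕ) : ℝ := ((a (n + k) : ℝ) - 1) / blockProd a n k

noncomputable def tailSum (a : ℕ → ℕ) (n : ℕ) : ℝ := ∑' k, tailTerm a n k

section TailSum

variable {a : ℕ → ℕ}

@[simp]
lemma blockProd_zero (n : ℕ) : blockProd a n 0 = 1 := Finset.prod_range_zero _

lemma blockProd_succ (n k : ℕ) : blockProd a n (k + 1) = blockProd a n k * a (n + k) :=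
  Finset.prod_range_succ _ _

lemma blockProd_succ' (n k : ℕ) : blockProd a n (k + 1) = a n * blockProd a (n + 1) k := by
  rw [blockProd, Finset.prod_range_succ', mul_comm, add_zero]
  simp only [blockProd, add_assoc, add_comm 1]

lemma blockProd_pos (ha : ∀ k, 0 < a k) (n k : ℕ) : 0 < blockProd a n k :=
  Finset.prod_pos fun i _ => by exact_mod_cast ha (n + i)

lemma two_pow_le_blockProd (ha : ∀ k, 2 ≤ a k) (n k : ℕ) : (2 : ℝ) ^ k ≤ blockProd a n k := by
  simpa [blockProd] using Finset.prod_le_prod (s := Finset.range k) (fun _ _ => zero_le_two)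
    fun i _ => (by exact_mod_cast ha (n + i) : (2 : ℝ) ≤ a (n + i))

lemma hasSum_inv_blockProd_sub (ha : ∀ k, 2 ≤ a k) (n : ℕ) :
    HasSum (fun k => (blockProd a n k)⁻¹ - (blockProd a n (k + 1))⁻¹) 1 := by
  have hpos := blockProd_pos (fun k => zero_lt_two.trans_le (ha k)) n
  have hnonneg : ∀ k, 0 ≤ (blockProd a n k)⁻¹ - (blockProd a n (k + 1))⁻¹ := fun k => by
    rw [sub_nonneg, blockProd_succ]
    refine inv_anti₀ (hpos k) (le_mul_of_one_le_right (hpos k).le ?_)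
    exact_mod_cast one_le_two.trans (ha (n + k))
  have hlim : Tendsto (fun k => (blockProd a n k)⁻¹) atTop (𝓝 0) :=
    tendsto_inv_atTop_zero.comp <| tendsto_atTop_mono (two_pow_le_blockProd ha n)
      (tendsto_pow_atTop_atTop_of_one_lt one_lt_two)
  rw [hasSum_iff_tendsto_nat_of_nonneg hnonneg]
  simpa only [Finset.sum_range_sub', blockProd_zero, inv_one, sub_zero] using hlim.const_sub 1

lemma tailTerm_nonneg (ha : ∀ k, 0 < a k) (n k : ℕ) : 0 ≤ tailTerm a n k :=
  div_nonneg (sub_nonneg.2 (by exact_mod_cast ha (n + k))) (blockProd_pos ha n k).le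

lemma inv_blockProd_sub_inv_blockProd_succ (ha : ∀ k, 0 < a k) (n k : ℕ) :
    (blockProd a n k)⁻¹ - (blockProd a n (k + 1))⁻¹
      = ((a (n + k) : ℝ) - 1) / blockProd a n (k + 1) := by
  have hP := (blockProd_pos ha n k).ne'
  have hak : (a (n + k) : ℝ) ≠ 0 := by exact_mod_cast (ha (n + k)).ne'
  rw [blockProd_succ]
  field_simp

lemma tailTerm_succ_le (ha : ∀ k, 0 < a k) {n k : ℕ} (hk : a (n + k + 1) < 2 * a (n + k)) :
    tailTerm a n (k + 1) ≤ 2 * ((blockProd a n k)⁻¹ - (blockProd a n (k + 1))⁻¹) := by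
  have hk' : (a (n + k + 1) : ℝ) + 1 ≤ 2 * a (n + k) := by exact_mod_cast hk
  rw [inv_blockProd_sub_inv_blockProd_succ ha, tailTerm, ← mul_div_assoc, ← add_assoc]
  gcongr
  · exact (blockProd_pos ha n _).le
  · linarith

lemma tailTerm_succ_lt (ha : ∀ k, 0 < a k) {n k : ℕ} (hk : a (n + k + 1) + 1 < 2 * a (n + k)) :
    tailTerm a n (k + 1) < 2 * ((blockProd a n k)⁻¹ - (blockProd a n (k + 1))⁻¹) := by
  have hk' : (a (n + k + 1) : ℝ) + 1 < 2 * a (n + k) := by exact_mod_cast hk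
  rw [inv_blockProd_sub_inv_blockProd_succ ha, tailTerm, ← mul_div_assoc, ← add_assoc]
  gcongr
  · exact blockProd_pos ha n _
  · linarith

lemma summable_tailTerm (ha : ∀ k, 2 ≤ a k) (hbound : ∀ k, a (k + 1) < 2 * a k) (n : ℕ) :
    Summable (tailTerm a n) := by
  have hpos k : 0 < a k := zero_lt_two.trans_le (ha k)
  refine (summable_nat_add_iff 1).1 <|
    Summable.of_nonneg_of_le (fun k => tailTerm_nonneg hpos n _)
      (fun k => tailTerm_succ_le hpos (hbound (n + k)))
      ((hasSum_inv_blockProd_sub ha n).summable.mul_left 2)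

lemma tsum_tailTerm_succ (n : ℕ) : ∑' k, tailTerm a n (k + 1) = tailSum a (n + 1) / a n := by
  rw [tailSum, ← tsum_div_const]
  refine tsum_congr fun k => ?_
  rw [tailTerm, tailTerm, blockProd_succ', div_mul_eq_div_div_swap, ← add_assoc, add_right_comm]

lemma tailSum_eq (ha : ∀ k, 2 ≤ a k) (hbound : ∀ k, a (k + 1) < 2 * a k) (n : ℕ) :
    tailSum a n = a n - 1 + tailSum a (n + 1) / a n := by
  rw [tailSum, (summable_tailTerm ha hbound n).tsum_eq_zero_add, tsum_tailTerm_succ]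
  simp [tailTerm]

lemma sub_one_le_tailSum (ha : ∀ k, 2 ≤ a k) (hbound : ∀ k, a (k + 1) < 2 * a k) (n : ℕ) :
    (a n : ℝ) - 1 ≤ tailSum a n := by
  simpa [tailSum, tailTerm] using (summable_tailTerm ha hbound n).le_tsum 0
    fun k _ => tailTerm_nonneg (fun k => zero_lt_two.trans_le (ha k)) n k

lemma tailSum_succ_lt (ha : ∀ k, 2 ≤ a k) (hbound : ∀ k, a (k + 1) < 2 * a k)
    (hfreq : ∃ᶠ k in atTop, a (k + 1) + 1 < 2 * a k) (n : ℕ) :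
    tailSum a (n + 1) < 2 * a n := by
  have hpos k : 0 < a k := zero_lt_two.trans_le (ha k)
  obtain ⟨j, hnj, hj⟩ := frequently_atTop.1 hfreq n
  obtain ⟨i, rfl⟩ := Nat.exists_eq_add_of_le hnj
  have htail : ∑' k, tailTerm a n (k + 1) < 2 := by
    calc ∑' k, tailTerm a n (k + 1)
        < ∑' k, 2 * ((blockProd a n k)⁻¹ - (blockProd a n (k + 1))⁻¹) :=
          Summable.tsum_lt_tsum_of_nonneg (fun k => tailTerm_nonneg hpos n _)
            (fun k => tailTerm_succ_le hpos (hbound (n + k))) (tailTerm_succ_lt hpos hj)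
            ((hasSum_inv_blockProd_sub ha n).summable.mul_left 2)
      _ = 2 := by rw [tsum_mul_left, (hasSum_inv_blockProd_sub ha n).tsum_eq, mul_one]
  rwa [tsum_tailTerm_succ, div_lt_iff₀ (by exact_mod_cast hpos n)] at htail

lemma floor_tailSum (ha : ∀ k, 2 ≤ a k) (hmono : StrictMono a)
    (hbound : ∀ k, a (k + 1) < 2 * a k) (hfreq : ∃ᶠ k in atTop, a (k + 1) + 1 < 2 * a k) (n : ℕ) :
    ⌊tailSum a n⌋ = a n := by
  have han : (0 : ℝ) < a n := by exact_mod_cast zero_lt_two.trans_le (ha n)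
  have hlower : 1 ≤ tailSum a (n + 1) / a n := by
    have : (a n : ℝ) + 1 ≤ a (n + 1) := by exact_mod_cast hmono n.lt_succ_self
    rw [le_div_iff₀ han]
    linarith [sub_one_le_tailSum ha hbound (n + 1)]
  have hupper : tailSum a (n + 1) / a n < 2 := by
    rw [div_lt_iff₀ han]
    exact tailSum_succ_lt ha hbound hfreq n
  rw [Int.floor_eq_iff, tailSum_eq ha hbound n]
  push_cast
  constructor <;> linarith

theorem floor_eq_of_rec (ha : ∀ k, 2 ≤ a k) (hmono : StrictMono a)
    (hbound : ∀ k, a (k + 1) < 2 * a k) (hfreq : ∃ᶠ k in atTop, a (k + 1) + 1 < 2 * a k)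
    {f : ℕ → ℝ} (h0 : f 0 = tailSum a 0) (hrec : ∀ n, f (n + 1) = (⌊f n⌋ : ℝ) * (f n - ⌊f n⌋ + 1))
    (n : ℕ) : ⌊f n⌋ = a n := by
  have hfloor := floor_tailSum ha hmono hbound hfreq
  suffices hf : ∀ n, f n = tailSum a n by rw [hf, hfloor]
  intro n
  induction n with
  | zero => exact h0
  | succ n ih =>
    have han : (a n : ℝ) ≠ 0 := by exact_mod_cast (zero_lt_two.trans_le (ha n)).ne'
    rw [hrec, ih, hfloor, tailSum_eq ha hbound n]
    push_cast
    field_simp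
    ring

end TailSum

lemma sub_one_eq_two_pow_mul {R : Type*} [CommRing R] {b : ℕ → R}
    (hb : ∀ i, b (i + 1) + 1 = 2 * b i) (i : ℕ) : b i - 1 = 2 ^ i * (b 0 - 1) := by
  induction i with
  | zero => ring
  | succ i ih => linear_combination hb i + 2 * ih

lemma two_le_p (k : ℕ) : 2 ≤ p k := (Nat.prime_nth_prime k).two_le

lemma p_strictMono : StrictMono p := Nat.nth_strictMono Nat.infinite_setOfPred_prime

lemma p_succ_le_of_lt {j q : ℕ} (hq : q.Prime) (h : p j < q) : p (j + 1) ≤ q := by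
  by_contra! h'
  exact h.not_ge (Nat.le_nth_of_lt_nth_succ h' hq)

lemma p_succ_lt_two_mul (j : ℕ) : p (j + 1) < 2 * p j := by
  have h2 := two_le_p j
  obtain ⟨q, hq, hjq, hq2⟩ := Nat.exists_prime_lt_and_le_two_mul (p j) (by omega)
  refine (p_succ_le_of_lt hq hjq).trans_lt (hq2.lt_of_ne ?_)
  rintro rfl
  exact Nat.not_prime_mul (by omega) (by omega) hq

lemma frequently_p_succ_add_one_lt : ∃ᶠ j in atTop, p (j + 1) + 1 < 2 * p j := by
  refine frequently_atTop.2 fun n => ?_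
  by_contra! h
  have hchain (i : ℕ) : p (n + (i + 1)) + 1 = 2 * p (n + i) := by
    have := h (n + i) (by omega)
    have := p_succ_lt_two_mul (n + i)
    rw [← add_assoc]
    omega
  set q := p (n + 1) with hq_def
  have : Fact q.Prime := ⟨Nat.prime_nth_prime _⟩
  have hpow := sub_one_eq_two_pow_mul (R := ZMod q) (b := fun i => (p (n + i) : ZMod q))
    fun i => by exact_mod_cast congrArg (Nat.cast : ℕ → ZMod q) (hchain i)
  have hdvd : q ∣ p (n + q) := by
    have hpow_one := hpow 1
    have hpow_q := hpow q
    simp only [ZMod.pow_card, pow_one, ← hq_def, ZMod.natCast_self] at hpow_one hpow_q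
    rw [← ZMod.natCast_eq_zero_iff]
    linear_combination hpow_q - hpow_one
  have hlt : q < p (n + q) := p_strictMono (by have := two_le_p (n + 1); omega)
  exact hlt.ne ((Nat.prime_dvd_prime_iff_eq Fact.out (Nat.prime_nth_prime _)).1 hdvd)

/-- The paper's sequence `f_{n}` with `f_1 = ∑ (p_k - 1)/(p_1 ⋯ p_{k-1})`, here
0-indexed: `f 0 = f_1` and `f (n+1) = ⌊f n⌋ (f n - ⌊f n⌋ + 1)`.  Its floor is
always a prime: `⌊f n⌋` is the `(n+1)`-st prime. -/
theorem statement1 (f : ℕ → ℝ)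
    (h1 : f 0 = ∑' k, primeTerm k)
    (hrec : ∀ n, f (n + 1) = (⌊f n⌋ : ℝ) * (f n - ⌊f n⌋ + 1)) :
    ∀ n, ⌊f n⌋ = (p n : ℤ) := by
  intro n
  refine floor_eq_of_rec two_le_p p_strictMono p_succ_lt_two_mul
    frequently_p_succ_add_one_lt (h1.trans (tsum_congr fun k => ?_)) hrec n
  simp [primeTerm, tailTerm, blockProd]
end

section
/- Let a_1, a_2, a_3, \ldots be a sequence of integers with a_1 \ge 2 and a_n < a_{n+1} \le 2 a_n - 1 for all n \ge 1. Then the series c = \sum_{k=1}^\infty (a_k - 1)/(a_1 a_2 \cdots a_{k-1}) converges (the empty product for k = 1 being 1), and its sum c satisfies a_1 < c \le a_1 + 1. -/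
/-!
Write `P k = a 0 ⋯ a (k-1)`. Since `P (k+1) = a k * P k`, the `k`-th term is
`(a k - 1) / P k = a k / P k - a (k+1) / P (k+1) + (a (k+1) - a k) / P (k+1)`,
so the series is `a 0 + ∑ (a (k+1) - a k) / P (k+1)`, because `a k / P k → 0`.
Each correction term is positive, and `a (k+1) - a k ≤ a k - 1` bounds it by
`1 / P k - 1 / P (k+1)`, which telescopes to `1`.
-/

open Finset Filter Topology

lemma hasSum_sub_succ_of_antitone {f : ℕ → ℝ} {l : ℝ} (hf : Antitone f)
    (hl : Tendsto f atTop (𝓝 l)) : HasSum (fun n => f n - f (n + 1)) (f 0 - l) := by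
  rw [hasSum_iff_tendsto_nat_of_nonneg (fun n => sub_nonneg.2 (hf n.le_succ))]
  simp_rw [sum_range_sub']
  exact tendsto_const_nhds.sub hl

namespace BertrandSeries

variable {a : ℕ → ℝ}

lemma prod_range_pos (ha : ∀ n, 0 < a n) (k : ℕ) : 0 < ∏ i ∈ range k, a i :=
  prod_pos fun i _ => ha i

lemma tendsto_inv_prod_range (h0 : 1 < a 0) (hmono : Monotone a) :
    Tendsto (fun k => (∏ i ∈ range k, a i)⁻¹) atTop (𝓝 0) := by
  refine Tendsto.inv_tendsto_atTop (tendsto_atTop_mono (fun k => ?_)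
    (tendsto_pow_atTop_atTop_of_one_lt h0))
  calc a 0 ^ k = ∏ _i ∈ range k, a 0 := by rw [prod_const, card_range]
    _ ≤ ∏ i ∈ range k, a i :=
      prod_le_prod (fun _ _ => by linarith) fun i _ => hmono (Nat.zero_le i)

lemma antitone_inv_prod_range (ha : ∀ n, 1 ≤ a n) :
    Antitone fun k => (∏ i ∈ range k, a i)⁻¹ := by
  refine antitone_nat_of_succ_le fun k => ?_
  have hP := prod_range_pos (fun n => one_pos.trans_le (ha n)) k
  rw [prod_range_succ, mul_inv]
  exact mul_le_of_le_one_right (inv_pos.2 hP).le (inv_le_one_of_one_le₀ (ha k))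

lemma sub_one_div_prod_range_eq (ha : ∀ n, 0 < a n) (k : ℕ) :
    (a k - 1) / ∏ i ∈ range k, a i =
      (a k / ∏ i ∈ range k, a i - a (k + 1) / ∏ i ∈ range (k + 1), a i) +
        (a (k + 1) - a k) / ∏ i ∈ range (k + 1), a i := by
  have hP := (prod_range_pos ha k).ne'
  have hak := (ha k).ne'
  rw [prod_range_succ]
  field_simp
  ring

lemma sub_div_prod_range_le (ha : ∀ n, 0 < a n) (hgrow : ∀ n, a (n + 1) ≤ 2 * a n - 1)
    (k : ℕ) :
    (a (k + 1) - a k) / ∏ i ∈ range (k + 1), a i ≤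
      (∏ i ∈ range k, a i)⁻¹ - (∏ i ∈ range (k + 1), a i)⁻¹ := by
  have hP := prod_range_pos ha (k + 1)
  have hsub : (∏ i ∈ range k, a i)⁻¹ - (∏ i ∈ range (k + 1), a i)⁻¹ =
      (a k - 1) / ∏ i ∈ range (k + 1), a i := by
    rw [prod_range_succ]
    field_simp [(prod_range_pos ha k).ne', (ha k).ne']
  rw [hsub]
  exact div_le_div_of_nonneg_right (by linarith [hgrow k]) hP.le

lemma antitone_div_prod_range (ha : ∀ n, 0 < a n) (hgrow : ∀ n, a (n + 1) ≤ 2 * a n - 1) :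
    Antitone fun k => a k / ∏ i ∈ range k, a i := by
  refine antitone_nat_of_succ_le fun k => ?_
  have hP := prod_range_pos ha k
  have hsq : a (k + 1) ≤ a k * a k := by nlinarith [hgrow k, sq_nonneg (a k - 1)]
  rw [prod_range_succ, div_le_div_iff₀ (mul_pos hP (ha k)) hP]
  nlinarith

lemma div_prod_range_succ_le (ha : ∀ n, 0 < a n) (hgrow : ∀ n, a (n + 1) ≤ 2 * a n - 1)
    (k : ℕ) : a (k + 1) / ∏ i ∈ range (k + 1), a i ≤ 2 * (∏ i ∈ range k, a i)⁻¹ := by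
  have hP := prod_range_pos ha k
  rw [prod_range_succ, div_le_iff₀ (mul_pos hP (ha k))]
  field_simp
  linarith [hgrow k]

lemma tendsto_div_prod_range (h0 : 1 < a 0) (hmono : Monotone a)
    (hgrow : ∀ n, a (n + 1) ≤ 2 * a n - 1) :
    Tendsto (fun k => a k / ∏ i ∈ range k, a i) atTop (𝓝 0) := by
  have ha : ∀ n, 0 < a n := fun n => by linarith [hmono (Nat.zero_le n)]
  rw [← tendsto_add_atTop_iff_nat 1]
  refine tendsto_of_tendsto_of_tendsto_of_le_of_le tendsto_const_nhds
    (by simpa using (tendsto_inv_prod_range h0 hmono).const_mul 2)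
    (fun k => div_nonneg (ha _).le (prod_range_pos ha _).le) (div_prod_range_succ_le ha hgrow)

theorem summable_and_lt_tsum_and_tsum_le (hmono : StrictMono a)
    (hgrow : ∀ n, a (n + 1) ≤ 2 * a n - 1) :
    Summable (fun k => (a k - 1) / ∏ i ∈ range k, a i) ∧
      a 0 < ∑' k, (a k - 1) / ∏ i ∈ range k, a i ∧
      ∑' k, (a k - 1) / ∏ i ∈ range k, a i ≤ a 0 + 1 := by
  have h0 : 1 < a 0 := by linarith [hmono (Nat.lt_succ_self 0), hgrow 0]
  have ha1 : ∀ n, 1 ≤ a n := fun n => h0.le.trans (hmono.monotone (Nat.zero_le n))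
  have ha : ∀ n, 0 < a n := fun n => one_pos.trans_le (ha1 n)
  set d : ℕ → ℝ := fun k => (a (k + 1) - a k) / ∏ i ∈ range (k + 1), a i
  have hd_nonneg : ∀ k, 0 ≤ d k := fun k =>
    div_nonneg (sub_nonneg.2 (hmono (Nat.lt_succ_self k)).le) (prod_range_pos ha _).le
  have hw :
      HasSum (fun k => (∏ i ∈ range k, a i)⁻¹ - (∏ i ∈ range (k + 1), a i)⁻¹) 1 := by
    simpa using hasSum_sub_succ_of_antitone (antitone_inv_prod_range ha1)
      (tendsto_inv_prod_range h0 hmono.monotone)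
  have hd : Summable d := hw.summable.of_nonneg_of_le hd_nonneg (sub_div_prod_range_le ha hgrow)
  have hz : HasSum
      (fun k => a k / ∏ i ∈ range k, a i - a (k + 1) / ∏ i ∈ range (k + 1), a i) (a 0) := by
    simpa using hasSum_sub_succ_of_antitone (antitone_div_prod_range ha hgrow)
      (tendsto_div_prod_range h0 hmono.monotone hgrow)
  have hsum : HasSum (fun k => (a k - 1) / ∏ i ∈ range k, a i) (a 0 + ∑' k, d k) := by
    simpa only [sub_one_div_prod_range_eq ha] using hz.add hd.hasSum
  have hd_pos : 0 < ∑' k, d k :=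
    hd.tsum_pos hd_nonneg 0 (div_pos (sub_pos.2 (hmono (Nat.lt_succ_self 0))) (prod_range_pos ha _))
  have hd_le : ∑' k, d k ≤ 1 := hasSum_le (sub_div_prod_range_le ha hgrow) hd.hasSum hw
  rw [hsum.tsum_eq]
  exact ⟨hsum.summable, by linarith, by linarith⟩

end BertrandSeries

theorem statement10_general (a : ℕ → ℤ)
    (hB : ∀ n, a n < a (n + 1) ∧ a (n + 1) ≤ 2 * a n - 1) :
    Summable (fun k => ((a k : ℝ) - 1) / ∏ i ∈ Finset.range k, (a i : ℝ)) ∧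
      (a 0 : ℝ) < (∑' k, ((a k : ℝ) - 1) / ∏ i ∈ Finset.range k, (a i : ℝ)) ∧
      (∑' k, ((a k : ℝ) - 1) / ∏ i ∈ Finset.range k, (a i : ℝ)) ≤ (a 0 : ℝ) + 1 :=
  BertrandSeries.summable_and_lt_tsum_and_tsum_le
    (strictMono_nat_of_lt_succ fun n => by exact_mod_cast (hB n).1)
    fun n => by exact_mod_cast (hB n).2

/-- For a sequence of integers `a` (0-indexed, so `a 0` is the paper's `a_1`) with
`a 0 ≥ 2` and `a n < a (n+1) ≤ 2 a n - 1`, the series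
`∑_{k=1}^∞ (a_k - 1)/(a_1 ⋯ a_{k-1})` converges and its sum `c` satisfies
`a_1 < c ≤ a_1 + 1`. -/
theorem statement10 (a : ℕ → ℤ) (h2 : 2 ≤ a 0)
    (hB : ∀ n, a n < a (n + 1) ∧ a (n + 1) ≤ 2 * a n - 1) :
    Summable (fun k => ((a k : ℝ) - 1) / ∏ i ∈ Finset.range k, (a i : ℝ)) ∧
      (a 0 : ℝ) < (∑' k, ((a k : ℝ) - 1) / ∏ i ∈ Finset.range k, (a i : ℝ)) ∧
      (∑' k, ((a k : ℝ) - 1) / ∏ i ∈ Finset.range k, (a i : ℝ)) ≤ (a 0 : ℝ) + 1 :=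
  statement10_general a hB
end

section
/- Let a_1, a_2, a_3, \ldots be a sequence of integers with a_1 \ge 2 and a_n < a_{n+1} \le 2 a_n - 1 for all n \ge 1, suppose that for every n there exists some k \ge n with a_{k+1} \le 2 a_k - 2, and suppose that a_{n+1}/a_n \to 1 as n \to \infty. Then the constant c = \sum_{k=1}^\infty (a_k - 1)/(a_1 a_2 \cdots a_{k-1}) (the empty product for k = 1 being 1) is irrational. -/
/-!
Write `f n = ∑_{k ≥ 0} (a_{n+k} - 1) / (a_n ⋯ a_{n+k-1})` for the tails of the series, so that
`f 0 = c` and `f (n+1) = a_n (f n - a_n + 1)`. Splitting off the telescoping part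
`∑ (a_{n+k} - 1) / (a_n ⋯ a_{n+k}) = 1` gives `f n = a_n + R_n` with
`R_n = ∑_k (a_{n+k+1} - a_{n+k}) / (a_n ⋯ a_{n+k})`, and `0 < R_n ≤ 2δ` once
`a_{m+1} ≤ (1 + δ) a_m` for all `m ≥ n`. If `c = p/q`, the recursion keeps every `q f n`
an integer, hence `q R_n` is an integer, which is impossible once `R_n < 1/q`.
-/

open Finset Filter Topology

def FollowsBertrand (b : ℕ → ℝ) : Prop :=
  ∀ n, b n < b (n + 1) ∧ b (n + 1) ≤ 2 * b n - 1

noncomputable def bertrandConstant (b : ℕ → ℝ) : ℝ :=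
  ∑' k, (b k - 1) / ∏ i ∈ range k, b i

noncomputable def bertrandRemainder (b : ℕ → ℝ) : ℝ :=
  ∑' k, (b (k + 1) - b k) / ∏ i ∈ range (k + 1), b i

namespace FollowsBertrand

variable {b : ℕ → ℝ}

theorem shift (hB : FollowsBertrand b) (n : ℕ) : FollowsBertrand (fun k => b (n + k)) :=
  fun k => hB (n + k)

theorem two_le (hB : FollowsBertrand b) (h0 : 2 ≤ b 0) (n : ℕ) : 2 ≤ b n :=
  h0.trans <| (strictMono_nat_of_lt_succ fun k => (hB k).1).monotone n.zero_le

end FollowsBertrand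

section Series

variable {b : ℕ → ℝ}

theorem two_pow_le_prod_range (hb : ∀ n, 2 ≤ b n) (k : ℕ) :
    (2 : ℝ) ^ k ≤ ∏ i ∈ range k, b i := by
  simpa using prod_le_prod (fun _ _ => zero_le_two) (fun i _ => hb i) (s := range k)

theorem prod_range_pos (hb : ∀ n, 2 ≤ b n) (k : ℕ) : 0 < ∏ i ∈ range k, b i :=
  prod_pos fun i _ => zero_lt_two.trans_le (hb i)

theorem hasSum_sub_one_div_prod_range_succ (hb : ∀ n, 2 ≤ b n) :
    HasSum (fun k => (b k - 1) / ∏ i ∈ range (k + 1), b i) 1 := by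
  have hW := prod_range_pos hb
  have hterm : ∀ k, (b k - 1) / ∏ i ∈ range (k + 1), b i
      = 1 / ∏ i ∈ range k, b i - 1 / ∏ i ∈ range (k + 1), b i := by
    intro k
    rw [prod_range_succ]
    field_simp [(hW k).ne', (zero_lt_two.trans_le (hb k)).ne']
  have hnonneg : ∀ k, 0 ≤ (b k - 1) / ∏ i ∈ range (k + 1), b i := fun k =>
    div_nonneg (by linarith [hb k]) (hW _).le
  have hdecay : Tendsto (fun k => 1 / ∏ i ∈ range k, b i) atTop (𝓝 0) := by
    refine squeeze_zero (fun k => (one_div_pos.mpr (hW k)).le) (fun k => ?_)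
      (tendsto_pow_atTop_nhds_zero_of_lt_one (by norm_num : (0 : ℝ) ≤ 1 / 2) (by norm_num))
    rw [one_div_pow]
    exact one_div_le_one_div_of_le (by positivity) (two_pow_le_prod_range hb k)
  rw [hasSum_iff_tendsto_nat_of_nonneg hnonneg]
  simp only [hterm, sum_range_sub', range_zero, prod_empty, div_one]
  simpa using tendsto_const_nhds.sub hdecay

theorem summable_remainder (hb : ∀ n, 2 ≤ b n) (hB : FollowsBertrand b) :
    Summable (fun k => (b (k + 1) - b k) / ∏ i ∈ range (k + 1), b i) := by
  refine (hasSum_sub_one_div_prod_range_succ hb).summable.of_nonneg_of_le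
    (fun k => ?_) (fun k => ?_)
  · exact div_nonneg (by linarith [(hB k).1]) (prod_range_pos hb _).le
  · exact div_le_div_of_nonneg_right (by linarith [(hB k).2]) (prod_range_pos hb _).le

theorem hasSum_bertrandConstant (hb : ∀ n, 2 ≤ b n) (hB : FollowsBertrand b) :
    HasSum (fun k => (b k - 1) / ∏ i ∈ range k, b i) (b 0 + bertrandRemainder b) := by
  have htail : HasSum (fun k => (b (k + 1) - 1) / ∏ i ∈ range (k + 1), b i)
      (bertrandRemainder b + 1) := by
    convert (summable_remainder hb hB).hasSum.add (hasSum_sub_one_div_prod_range_succ hb) using 1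
    · funext k
      rw [← add_div]
      ring_nf
    · rfl
  refine (hasSum_nat_add_iff' 1).mp ?_
  rwa [sum_range_one, prod_range_zero, div_one, add_sub_sub_cancel]

theorem bertrandConstant_eq_add_remainder (hb : ∀ n, 2 ≤ b n) (hB : FollowsBertrand b) :
    bertrandConstant b = b 0 + bertrandRemainder b :=
  (hasSum_bertrandConstant hb hB).tsum_eq

theorem bertrandConstant_eq_head_add (hs : Summable fun k => (b k - 1) / ∏ i ∈ range k, b i) :
    bertrandConstant b = b 0 - 1 + bertrandConstant (fun k => b (k + 1)) / b 0 := by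
  unfold bertrandConstant
  rw [hs.tsum_eq_zero_add, ← tsum_div_const]
  simp [prod_range_succ', div_div]

theorem bertrandConstant_shift_succ (hb : ∀ n, 2 ≤ b n) (hB : FollowsBertrand b) (n : ℕ) :
    bertrandConstant (fun k => b (n + 1 + k))
      = b n * (bertrandConstant (fun k => b (n + k)) - b n + 1) := by
  have hshift := bertrandConstant_eq_head_add
    (hasSum_bertrandConstant (fun k => hb (n + k)) (hB.shift n)).summable
  have hbn : b n ≠ 0 := (zero_lt_two.trans_le (hb n)).ne'
  simp only [add_zero, ← add_assoc, add_right_comm n _ 1] at hshift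
  rw [hshift]
  field_simp
  ring

theorem bertrandRemainder_pos (hb : ∀ n, 2 ≤ b n) (hB : FollowsBertrand b) :
    0 < bertrandRemainder b := by
  refine (summable_remainder hb hB).tsum_pos (fun k => ?_) 0 ?_
  · exact div_nonneg (by linarith [(hB k).1]) (prod_range_pos hb _).le
  · exact div_pos (by linarith [(hB 0).1]) (prod_range_pos hb _)

theorem bertrandRemainder_le (hb : ∀ n, 2 ≤ b n) (hB : FollowsBertrand b) {δ : ℝ}
    (hδ : ∀ n, b (n + 1) ≤ (1 + δ) * b n) : bertrandRemainder b ≤ 2 * δ := by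
  have hδ0 : 0 ≤ δ := by nlinarith [hδ 0, (hB 0).1, hb 0]
  have hgeom : HasSum (fun k => δ * (1 / 2 : ℝ) ^ k) (2 * δ) :=
    mul_comm δ 2 ▸ hasSum_geometric_two.mul_left δ
  refine hasSum_le (fun k => ?_) (summable_remainder hb hB).hasSum hgeom
  have hbk : 0 < b k := zero_lt_two.trans_le (hb k)
  have hW := prod_range_pos hb k
  calc (b (k + 1) - b k) / ∏ i ∈ range (k + 1), b i
      ≤ δ * b k / ((∏ i ∈ range k, b i) * b k) := by
        rw [prod_range_succ]
        exact div_le_div_of_nonneg_right (by linarith [hδ k]) (by positivity)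
    _ = δ / ∏ i ∈ range k, b i := by field_simp
    _ ≤ δ / 2 ^ k := div_le_div_of_nonneg_left hδ0 (by positivity) (two_pow_le_prod_range hb k)
    _ = δ * (1 / 2) ^ k := by rw [one_div_pow, mul_one_div]

theorem exists_bertrandRemainder_lt (hb : ∀ n, 2 ≤ b n) (hB : FollowsBertrand b)
    (hratio : Tendsto (fun n => b (n + 1) / b n) atTop (𝓝 1)) {ε : ℝ} (hε : 0 < ε) :
    ∃ n, 0 < bertrandRemainder (fun k => b (n + k))
      ∧ bertrandRemainder (fun k => b (n + k)) < ε := by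
  obtain ⟨N, hN⟩ := eventually_atTop.mp
    (hratio.eventually_lt_const (by linarith : (1 : ℝ) < 1 + ε / 3))
  have hδ : ∀ k, b (N + k + 1) ≤ (1 + ε / 3) * b (N + k) := fun k =>
    ((div_lt_iff₀ (zero_lt_two.trans_le (hb _))).mp (hN (N + k) (N.le_add_right k))).le
  refine ⟨N, bertrandRemainder_pos (fun k => hb (N + k)) (hB.shift N), ?_⟩
  have := bertrandRemainder_le (fun k => hb (N + k)) (hB.shift N) hδ
  linarith

end Series

theorem irrational_of_recurrence (f : ℕ → ℝ) (a : ℕ → ℤ)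
    (hrec : ∀ n, f (n + 1) = a n * (f n - a n + 1))
    (hsmall : ∀ ε > 0, ∃ n, 0 < f n - a n ∧ f n - a n < ε) : Irrational (f 0) := by
  rintro ⟨r, hr⟩
  have hint : ∀ n, ∃ m : ℤ, (r.den : ℝ) * f n = m := by
    intro n
    induction n with
    | zero => exact ⟨r.num, by rw [← hr]; exact_mod_cast r.den_mul_eq_num⟩
    | succ n ih =>
      obtain ⟨m, hm⟩ := ih
      exact ⟨a n * (m - r.den * a n + r.den), by rw [hrec]; push_cast; rw [← hm]; ring⟩
  have hden : (0 : ℝ) < r.den := by exact_mod_cast r.pos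
  obtain ⟨n, hpos, hlt⟩ := hsmall (1 / r.den) (by positivity)
  obtain ⟨m, hm⟩ := hint n
  have hfrac : (r.den : ℝ) * (f n - a n) = ((m - r.den * a n : ℤ) : ℝ) := by
    push_cast
    rw [← hm]
    ring
  have h0 : (0 : ℝ) < ((m - r.den * a n : ℤ) : ℝ) := hfrac ▸ mul_pos hden hpos
  have h1 : ((m - r.den * a n : ℤ) : ℝ) < 1 := by
    rw [← hfrac]
    rwa [lt_div_iff₀' hden] at hlt
  have h0' : 0 < m - r.den * a n := by exact_mod_cast h0
  have h1' : m - r.den * a n < 1 := by exact_mod_cast h1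
  omega

theorem statement12_general (a : ℕ → ℤ) (h2 : 2 ≤ a 0)
    (hB : ∀ n, a n < a (n + 1) ∧ a (n + 1) ≤ 2 * a n - 1)
    (hratio : Filter.Tendsto (fun n => (a (n + 1) : ℝ) / (a n : ℝ))
      Filter.atTop (nhds 1)) :
    Irrational (∑' k, ((a k : ℝ) - 1) / ∏ i ∈ Finset.range k, (a i : ℝ)) := by
  have hBR : FollowsBertrand (fun n => (a n : ℝ)) := fun n => by beta_reduce; exact_mod_cast hB n
  have h2R : ∀ n, 2 ≤ (a n : ℝ) := hBR.two_le (by exact_mod_cast h2)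
  set f : ℕ → ℝ := fun n => bertrandConstant (fun k => (a (n + k) : ℝ))
  have hrec : ∀ n, f (n + 1) = a n * (f n - a n + 1) :=
    bertrandConstant_shift_succ h2R hBR
  have hsmall : ∀ ε > 0, ∃ n, 0 < f n - a n ∧ f n - a n < ε := by
    intro ε hε
    obtain ⟨n, hn⟩ := exists_bertrandRemainder_lt h2R hBR hratio hε
    refine ⟨n, ?_⟩
    simp only [f]
    rwa [bertrandConstant_eq_add_remainder (fun k => h2R (n + k)) (hBR.shift n), add_zero,
      add_sub_cancel_left]
  simpa [f, bertrandConstant] using irrational_of_recurrence f a hrec hsmall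

/-- For a sequence of integers `a` (0-indexed, so `a 0` is the paper's `a_1`)
following Bertrand's postulate, with infinitely many indices where the upper
bound is strict, and with `a (n+1) / a n → 1`, the constant
`c = ∑_{k=1}^∞ (a_k - 1)/(a_1 ⋯ a_{k-1})` is irrational. -/
theorem statement12 (a : ℕ → ℤ) (h2 : 2 ≤ a 0)
    (hB : ∀ n, a n < a (n + 1) ∧ a (n + 1) ≤ 2 * a n - 1)
    (hstrict : ∀ n, ∃ k, n ≤ k ∧ a (k + 1) ≤ 2 * a k - 2)
    (hratio : Filter.Tendsto (fun n => (a (n + 1) : ℝ) / (a n : ℝ))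
      Filter.atTop (nhds 1)) :
    Irrational (∑' k, ((a k : ℝ) - 1) / ∏ i ∈ Finset.range k, (a i : ℝ)) :=
  statement12_general a h2 hB hratio
end

section
/- Let \alpha = \sum_{i=1}^\infty p_i / 10^{2^{i+1}}, where p_i is the i-th prime. Then for every n \ge 1, p_n = \lfloor 10^{2^{n+1}} \alpha \rfloor - 10^{2^n} \lfloor 10^{2^n} \alpha \rfloor. -/
open scoped BigOperators

/-- The constant `α = ∑_{i=1}^∞ p_i / 10^{2^{i+1}}`, written 0-indexed:
the `j`-th summand is `p_{j+1} / 10^{2^{j+2}}`. -/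
noncomputable def alpha : ℝ := ∑' j : ℕ, (p j : ℝ) / 10 ^ (2 ^ (j + 2))

/-!
By Bertrand's postulate `p_k ≤ 2 ^ (k + 1) ≤ 10 ^ (k + 1)`, so `p_k` fits into the block of
`2 ^ (k + 1)` decimal digits at positions `2 ^ (k + 1) + 1, …, 2 ^ (k + 2)` of `α`, with room to
spare. Hence `10 ^ (2 ^ (n + 1)) * α` is the integer `blockPrefix p n` spelled by the first `n`
blocks plus a tail in `[0, 1)`, and shifting by one more block appends `p_n` to that integer.
-/

theorem Nat.nth_prime_succ_le_two_mul (k : ℕ) :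
    Nat.nth Nat.Prime (k + 1) ≤ 2 * Nat.nth Nat.Prime k := by
  obtain ⟨q, hq, hlt, hle⟩ := Nat.bertrand _ (Nat.prime_nth_prime k).ne_zero
  exact (not_lt.1 fun h => (Nat.le_nth_of_lt_nth_succ h hq).not_gt hlt).trans hle

theorem Nat.nth_prime_le_two_pow (k : ℕ) : Nat.nth Nat.Prime k ≤ 2 ^ (k + 1) := by
  induction k with
  | zero => simp [Nat.nth_prime_zero_eq_two]
  | succ k ih =>
    calc Nat.nth Nat.Prime (k + 1) ≤ 2 * Nat.nth Nat.Prime k := Nat.nth_prime_succ_le_two_mul k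
      _ ≤ 2 ^ (k + 1 + 1) := by rw [pow_succ']; omega

lemma p_le_ten_pow (k : ℕ) : p k ≤ 10 ^ (k + 1) :=
  (Nat.nth_prime_le_two_pow k).trans (Nat.pow_le_pow_left (by norm_num) _)

lemma add_le_two_pow_add_two (n j : ℕ) :
    j + n + 1 + (2 ^ (n + 1) + (j + 1)) ≤ 2 ^ (j + n + 2) := by
  have hn : n + 2 ≤ 2 ^ (n + 1) := Nat.lt_two_pow_self
  have hj : j + 2 ≤ 2 ^ (j + 1) := Nat.lt_two_pow_self
  have hsplit : 2 ^ (j + n + 2) = 2 ^ (n + 1) * 2 ^ (j + 1) := by rw [← pow_add]; ring_nf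
  nlinarith

noncomputable def blockEncode (a : ℕ → ℕ) : ℝ := ∑' j, (a j : ℝ) / 10 ^ (2 ^ (j + 2))

noncomputable def blockTail (a : ℕ → ℕ) (n : ℕ) : ℝ :=
  ∑' j, (a (j + n) : ℝ) / 10 ^ (2 ^ (j + n + 2))

def blockPrefix (a : ℕ → ℕ) : ℕ → ℤ
  | 0 => 0
  | n + 1 => 10 ^ (2 ^ (n + 1)) * blockPrefix a n + a n

section BlockEncoding

variable {a : ℕ → ℕ}

lemma ten_pow_mul_blockTerm_le (ha : ∀ k, a k ≤ 10 ^ (k + 1)) (n j : ℕ) :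
    (10 : ℝ) ^ (2 ^ (n + 1)) * ((a (j + n) : ℝ) / 10 ^ (2 ^ (j + n + 2))) ≤
      (1 / 10) ^ (j + 1) := by
  have hnat : 10 ^ (2 ^ (n + 1)) * a (j + n) * 10 ^ (j + 1) ≤ 10 ^ (2 ^ (j + n + 2)) :=
    calc 10 ^ (2 ^ (n + 1)) * a (j + n) * 10 ^ (j + 1)
        ≤ 10 ^ (2 ^ (n + 1)) * 10 ^ (j + n + 1) * 10 ^ (j + 1) := by gcongr; exact ha _
      _ = 10 ^ (j + n + 1 + (2 ^ (n + 1) + (j + 1))) := by ring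
      _ ≤ 10 ^ (2 ^ (j + n + 2)) :=
        Nat.pow_le_pow_right (by norm_num) (add_le_two_pow_add_two n j)
  rw [mul_div_assoc', div_pow, one_pow, div_le_div_iff₀ (by positivity) (by positivity), one_mul]
  exact_mod_cast hnat

lemma summable_blockTerm (ha : ∀ k, a k ≤ 10 ^ (k + 1)) :
    Summable (fun j => (a j : ℝ) / 10 ^ (2 ^ (j + 2))) := by
  refine (summable_mul_left_iff (a := (10 : ℝ) ^ (2 ^ 1)) (by positivity)).1 ?_
  exact Summable.of_nonneg_of_le (fun j => by positivity) (ten_pow_mul_blockTerm_le ha 0)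
    ((summable_geometric_of_lt_one (by norm_num) (by norm_num)).comp_injective
      (add_left_injective 1))

lemma summable_blockTerm_nat_add (ha : ∀ k, a k ≤ 10 ^ (k + 1)) (n : ℕ) :
    Summable (fun j => (a (j + n) : ℝ) / 10 ^ (2 ^ (j + n + 2))) :=
  (summable_nat_add_iff (f := fun j => (a j : ℝ) / 10 ^ (2 ^ (j + 2))) n).2
    (summable_blockTerm ha)

lemma blockTail_zero (a : ℕ → ℕ) : blockTail a 0 = blockEncode a := rfl

lemma blockTail_succ (ha : ∀ k, a k ≤ 10 ^ (k + 1)) (n : ℕ) :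
    blockTail a n = a n / 10 ^ (2 ^ (n + 2)) + blockTail a (n + 1) := by
  rw [blockTail, (summable_blockTerm_nat_add ha n).tsum_eq_zero_add, blockTail, zero_add]
  simp only [add_right_comm _ 1 n, add_assoc]

lemma ten_pow_mul_blockTail_nonneg (n : ℕ) : 0 ≤ (10 : ℝ) ^ (2 ^ (n + 1)) * blockTail a n :=
  mul_nonneg (by positivity) (tsum_nonneg fun _ => by positivity)

lemma ten_pow_mul_blockTail_lt_one (ha : ∀ k, a k ≤ 10 ^ (k + 1)) (n : ℕ) :
    (10 : ℝ) ^ (2 ^ (n + 1)) * blockTail a n < 1 := by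
  have hgeom : HasSum (fun j : ℕ => ((1 : ℝ) / 10) ^ (j + 1)) (1 / 9) := by
    have h :=
      (hasSum_geometric_of_lt_one (r := (1 : ℝ) / 10) (by norm_num) (by norm_num)).mul_right
        (1 / 10)
    rwa [show ((1 : ℝ) - 1 / 10)⁻¹ * (1 / 10) = 1 / 9 by norm_num,
      funext fun i => (pow_succ _ i).symm] at h
  calc (10 : ℝ) ^ (2 ^ (n + 1)) * blockTail a n
      = ∑' j, (10 : ℝ) ^ (2 ^ (n + 1)) * ((a (j + n) : ℝ) / 10 ^ (2 ^ (j + n + 2))) :=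
        (tsum_mul_left).symm
    _ ≤ 1 / 9 := hasSum_le (ten_pow_mul_blockTerm_le ha n)
        ((summable_blockTerm_nat_add ha n).mul_left _).hasSum hgeom
    _ < 1 := by norm_num

lemma ten_pow_mul_blockEncode (ha : ∀ k, a k ≤ 10 ^ (k + 1)) (n : ℕ) :
    (10 : ℝ) ^ (2 ^ (n + 1)) * blockEncode a =
      blockPrefix a n + 10 ^ (2 ^ (n + 1)) * blockTail a n := by
  induction n with
  | zero => simp [blockPrefix, blockTail_zero]
  | succ n ih =>
    have hpow : (10 : ℝ) ^ (2 ^ (n + 2)) = 10 ^ (2 ^ (n + 1)) * 10 ^ (2 ^ (n + 1)) := by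
      rw [← pow_add, pow_succ 2 (n + 1), mul_two]
    rw [hpow, mul_assoc, ih, blockTail_succ ha n, blockPrefix, ← hpow]
    push_cast
    field_simp
    ring

theorem floor_ten_pow_mul_blockEncode (ha : ∀ k, a k ≤ 10 ^ (k + 1)) (n : ℕ) :
    ⌊(10 : ℝ) ^ (2 ^ (n + 1)) * blockEncode a⌋ = blockPrefix a n := by
  rw [ten_pow_mul_blockEncode ha, Int.floor_intCast_add, Int.floor_eq_zero_iff.2
    ⟨ten_pow_mul_blockTail_nonneg n, ten_pow_mul_blockTail_lt_one ha n⟩, add_zero]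

end BlockEncoding

/-- `p_n = ⌊10^{2^{n+1}} α⌋ - 10^{2^n} ⌊10^{2^n} α⌋` for all `n ≥ 1`
(here 0-indexed: the paper's `n` is our `n + 1`). -/
theorem statement15 :
    ∀ n : ℕ,
      (p n : ℤ) = ⌊(10 : ℝ) ^ (2 ^ (n + 2)) * alpha⌋
        - 10 ^ (2 ^ (n + 1)) * ⌊(10 : ℝ) ^ (2 ^ (n + 1)) * alpha⌋ := by
  intro n
  have hfloor := floor_ten_pow_mul_blockEncode p_le_ten_pow
  rw [show alpha = blockEncode p from rfl, hfloor (n + 1), hfloor n, blockPrefix]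
  ring
end

section
/- The constant f_1 = \sum_{k=1}^\infty (p_k - 1)/(p_1 p_2 \cdots p_{k-1}) satisfies 2.920050977316 < f_1 < 2.920050977317. -/
/-!
Consecutive primes satisfy `p_{k+1} ≤ 2 p_k` (Bertrand), so from `p_k ≥ 5` on each summand is at
most half the previous one. Summing the first fifteen terms exactly and bounding the rest by the
geometric series `2 · (p_16 - 1) / (p_1 ⋯ p_15)` pins the constant down to about `10⁻¹⁶`.
-/

open scoped BigOperators

theorem summable_and_tsum_le_of_succ_le_mul {u : ℕ → ℝ} {c : ℝ} (hu : ∀ k, 0 ≤ u k)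
    (hc₀ : 0 ≤ c) (hc₁ : c < 1) (h : ∀ k, u (k + 1) ≤ c * u k) :
    Summable u ∧ ∑' k, u k ≤ u 0 / (1 - c) := by
  have hle : ∀ n, u n ≤ u 0 * c ^ n := fun n =>
    (le_geom hc₀ n fun k _ => h k).trans_eq (mul_comm _ _)
  have hgeom := (hasSum_geometric_of_lt_one hc₀ hc₁).mul_left (u 0)
  have hsum : Summable u := .of_nonneg_of_le hu hle hgeom.summable
  exact ⟨hsum, hasSum_le hle hsum.hasSum hgeom⟩

lemma p_prime (k : ℕ) : (p k).Prime := Nat.prime_nth_prime k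

lemma p_eq_of_count_eq {q k : ℕ} (hq : q.Prime) (hc : Nat.count Nat.Prime q = k) : p k = q :=
  hc ▸ Nat.nth_count hq

lemma p_succ_le_two_mul (k : ℕ) : p (k + 1) ≤ 2 * p k := by
  obtain ⟨q, hq, hlt, hle⟩ := Nat.bertrand (p k) (p_prime k).ne_zero
  have hcount : k < Nat.count Nat.Prime q := by
    simpa [p, Nat.count_nth_of_infinite Nat.infinite_setOfPred_prime] using
      Nat.count_strict_mono (p_prime k) hlt
  calc p (k + 1) ≤ p (Nat.count Nat.Prime q) := Nat.nth_monotone Nat.infinite_setOfPred_prime hcount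
    _ = q := p_eq_of_count_eq hq rfl
    _ ≤ 2 * p k := hle

lemma first_sixteen_p :
    p 0 = 2 ∧ p 1 = 3 ∧ p 2 = 5 ∧ p 3 = 7 ∧ p 4 = 11 ∧ p 5 = 13 ∧ p 6 = 17 ∧ p 7 = 19 ∧
      p 8 = 23 ∧ p 9 = 29 ∧ p 10 = 31 ∧ p 11 = 37 ∧ p 12 = 41 ∧ p 13 = 43 ∧ p 14 = 47 ∧
      p 15 = 53 := by
  refine ⟨?_, ?_, ?_, ?_, ?_, ?_, ?_, ?_, ?_, ?_, ?_, ?_, ?_, ?_, ?_, ?_⟩ <;>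
    exact p_eq_of_count_eq (by norm_num) (by decide)

lemma prod_range_p_pos (k : ℕ) : 0 < ∏ i ∈ Finset.range k, (p i : ℝ) :=
  Finset.prod_pos fun i _ => by exact_mod_cast (p_prime i).pos

lemma primeTerm_pos (k : ℕ) : 0 < primeTerm k := by
  have : (2 : ℝ) ≤ p k := by exact_mod_cast (p_prime k).two_le
  exact div_pos (by linarith) (prod_range_p_pos k)

lemma primeTerm_succ_le_half_mul {k : ℕ} (hk : 2 ≤ k) :
    primeTerm (k + 1) ≤ 1 / 2 * primeTerm k := by
  have hfive : (5 : ℝ) ≤ p k := by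
    have : p 2 ≤ p k := Nat.nth_monotone Nat.infinite_setOfPred_prime hk
    exact_mod_cast first_sixteen_p.2.2.1 ▸ this
  have hbertrand : (p (k + 1) : ℝ) ≤ 2 * p k := by exact_mod_cast p_succ_le_two_mul k
  have hP := prod_range_p_pos k
  rw [primeTerm, primeTerm, Finset.prod_range_succ, div_le_iff₀ (by positivity),
    mul_comm (1 / 2 : ℝ), mul_assoc, div_mul_eq_mul_div, le_div_iff₀ hP]
  -- `2 (p_{k+1} - 1) ≤ 4 p_k - 2 ≤ p_k (p_k - 1)` as soon as `p_k ≥ 5`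
  nlinarith [mul_pos hP (show (0 : ℝ) < p k by linarith)]

lemma primeTerm_tail {n : ℕ} (hn : 2 ≤ n) :
    Summable (fun k => primeTerm (k + n)) ∧ ∑' k, primeTerm (k + n) ≤ 2 * primeTerm n := by
  have h := summable_and_tsum_le_of_succ_le_mul (u := fun k => primeTerm (k + n)) (c := 1 / 2)
    (fun k => (primeTerm_pos _).le) (by norm_num) (by norm_num)
    (fun k => by simpa only [add_right_comm] using primeTerm_succ_le_half_mul (by omega))
  refine ⟨h.1, h.2.trans_eq ?_⟩
  norm_num [div_eq_mul_inv, mul_comm]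

lemma summable_primeTerm : Summable primeTerm :=
  (summable_nat_add_iff 2).mp (primeTerm_tail le_rfl).1

lemma sum_range_fifteen_primeTerm :
    ∑ k ∈ Finset.range 15, primeTerm k = (516247702872119 : ℝ) / 176794072049595 := by
  obtain ⟨h0, h1, h2, h3, h4, h5, h6, h7, h8, h9, h10, h11, h12, h13, h14, -⟩ := first_sixteen_p
  simp only [primeTerm, Finset.prod_range_succ, Finset.prod_range_zero,
    Finset.sum_range_succ, Finset.sum_range_zero,
    h0, h1, h2, h3, h4, h5, h6, h7, h8, h9, h10, h11, h12, h13, h14]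
  norm_num

lemma primeTerm_fifteen : primeTerm 15 = 52 / 614889782588491410 := by
  obtain ⟨h0, h1, h2, h3, h4, h5, h6, h7, h8, h9, h10, h11, h12, h13, h14, h15⟩ := first_sixteen_p
  simp only [primeTerm, Finset.prod_range_succ, Finset.prod_range_zero,
    h0, h1, h2, h3, h4, h5, h6, h7, h8, h9, h10, h11, h12, h13, h14, h15]
  norm_num

/-- The prime-generating constant satisfies
`2.920050977316 < f_1 < 2.920050977317`. -/
theorem statement16 :
    (2.920050977316 : ℝ) < (∑' k, primeTerm k) ∧
      (∑' k, primeTerm k) < (2.920050977317 : ℝ) := by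
  have htail_nonneg : 0 ≤ ∑' k, primeTerm (k + 15) := tsum_nonneg fun k => (primeTerm_pos _).le
  have htail_le := (primeTerm_tail (n := 15) (by norm_num)).2
  rw [primeTerm_fifteen] at htail_le
  rw [← summable_primeTerm.sum_add_tsum_nat_add 15, sum_range_fifteen_primeTerm]
  constructor <;> norm_num <;> linarith
end
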